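/- arXiv:2602.16982 — 2 statements merged into one kernel-verified Lean document; each statement's English description precedes it below -/
import Mathlib

section
/- Let G ∈ ℝ^{N×N} be diagonalizable over ℂ with all eigenvalues in ℝ_{≥0}: there is an invertible P ∈ ℂ^{N×N} with P⁻¹GP diagonal with nonnegative real diagonal entries. Fix t₀ > 0. Then every trajectory q : [t₀, ∞) → ℝ^N of the NAGD game dynamics q''(t) + (3/t) q'(t) + G q(t) = 0 is bounded, q(t) converges to a limit q^∞, and q'(t) → 0 as t → ∞; moreover sup_{t ≥ t₀} ‖q(t)‖₂ ≤ κ(P)·(‖q(t₀)‖₂ + C‖q'(t₀)‖₂), where κ(P) = ‖P‖₂‖P⁻¹‖₂ is the condition number of P and C = max{t₀/2, λ_min^{-1/2}} with λ_min the smallest strictly positive eigenvalue of G (C = t₀/2 if G = 0). -/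
open Filter

/-- The Euclidean norm `‖x‖₂` of a vector `x ∈ ℝ^N`. -/
noncomputable def e2norm {N : ℕ} (x : Fin N → ℝ) : ℝ := Real.sqrt (∑ i, x i ^ 2)

/-- The operator 2-norm `‖M‖₂` of a complex matrix, i.e. the operator norm of the induced
linear map between Euclidean spaces. -/
noncomputable def l2OpNorm {N : ℕ} (M : Matrix (Fin N) (Fin N) ℂ) : ℝ :=
  ‖LinearMap.toContinuousLinearMap (Matrix.toEuclideanLin M)‖

/-- The constant `C = max {t₀/2, λ_min^{-1/2}}`, where `λ_min` is the smallest strictly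
positive entry of `d` (the eigenvalues of `G`); `C = t₀/2` if there is none (`G = 0`). -/
noncomputable def Cconst {N : ℕ} (t₀ : ℝ) (d : Fin N → ℝ) : ℝ :=
  if h : ((Finset.univ.filter fun i => 0 < d i).image d).Nonempty then
    max (t₀ / 2) ((((Finset.univ.filter fun i => 0 < d i).image d).min' h) ^ (-(1 : ℝ) / 2))
  else t₀ / 2

/-- NAGD game dynamics: `q` is a twice continuously differentiable trajectory with
velocity `v = q'` satisfying `q'' + (3/t) q' + G q = 0` on `[t₀, ∞)`. -/
def IsNAGDTrajectory {N : ℕ} (G : Matrix (Fin N) (Fin N) ℝ) (t₀ : ℝ)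
    (q v : ℝ → Fin N → ℝ) : Prop :=
  (∀ t, t₀ ≤ t → HasDerivAt q (v t) t) ∧
  (∀ t, t₀ ≤ t → HasDerivAt v (-(3 / t) • v t - G.mulVec (q t)) t)

/-! In the eigenbasis of `G` the dynamics decouple into scalar modes
`u'' + (3/t) u' + λ u = 0`, complex-valued but with real `λ ≥ 0`.

For `λ = 0` both `t³ u'` and `u + (t/2) u'` are conserved, which gives the mode explicitly:
`u(t) = u(t₀) + (t₀/2)(1 - (t₀/t)²) u'(t₀)`.

For `λ > 0` the energy `λ |u|² + |u'|²` is nonincreasing, so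
`|u(t)| ≤ |u(t₀)| + λ^{-1/2} |u'(t₀)|`; the Su–Boyd–Candès Lyapunov function
`λ t² |u|² + |2u + t u'|²` is nonincreasing as well, so `u` and `u'` are `O(1/t)`.

Passing between the two bases costs the factors `‖P‖₂` and `‖P⁻¹‖₂`. -/

open Topology Matrix

section Calculus

variable {E : Type*} [NormedAddCommGroup E] [NormedSpace ℝ E] {t₀ : ℝ}

theorem eq_of_hasDerivAt_zero_Ici {f : ℝ → E} (hf : ∀ t, t₀ ≤ t → HasDerivAt f 0 t) {t : ℝ}
    (ht : t₀ ≤ t) : f t = f t₀ :=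
  constant_of_has_deriv_right_zero (fun s hs => (hf s hs.1).continuousAt.continuousWithinAt)
    (fun s hs => (hf s hs.1).hasDerivWithinAt) t ⟨ht, le_rfl⟩

theorem le_of_hasDerivAt_nonpos_Ici {F F' : ℝ → ℝ} (hF : ∀ t, t₀ ≤ t → HasDerivAt F (F' t) t)
    (hF' : ∀ t, t₀ < t → F' t ≤ 0) {t : ℝ} (ht : t₀ ≤ t) : F t ≤ F t₀ :=
  antitoneOn_of_hasDerivWithinAt_nonpos (convex_Ici t₀)
    (fun s hs => (hF s hs).continuousAt.continuousWithinAt)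
    (fun s hs => by rw [interior_Ici] at hs ⊢; exact (hF s hs.le).hasDerivWithinAt)
    (fun s hs => by rw [interior_Ici] at hs; exact hF' s hs) Set.self_mem_Ici ht ht

omit [NormedSpace ℝ E] in
theorem tendsto_zero_of_norm_le_div {g : ℝ → E} {K : ℝ} (h : ∀ t, t₀ ≤ t → ‖g t‖ ≤ K / t) :
    Tendsto g atTop (𝓝 0) :=
  squeeze_zero_norm' (eventually_atTop.2 ⟨t₀, h⟩) (tendsto_const_nhds.div_atTop tendsto_id)

end Calculus

section Mode

variable {E : Type*} [NormedAddCommGroup E] [InnerProductSpace ℝ E]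

def IsNAGDMode (lam t₀ : ℝ) (u w : ℝ → E) : Prop :=
  (∀ t, t₀ ≤ t → HasDerivAt u (w t) t) ∧
  (∀ t, t₀ ≤ t → HasDerivAt w (-(3 / t) • w t - lam • u t) t)

namespace IsNAGDMode

variable {lam t₀ t : ℝ} {u w : ℝ → E}

theorem cube_smul_eq (h : IsNAGDMode 0 t₀ u w) (ht₀ : 0 < t₀) (ht : t₀ ≤ t) :
    t ^ 3 • w t = t₀ ^ 3 • w t₀ := by
  refine eq_of_hasDerivAt_zero_Ici (f := fun s => s ^ 3 • w s) (fun s hs => ?_) ht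
  have hs0 : s ≠ 0 := (ht₀.trans_le hs).ne'
  refine ((hasDerivAt_pow 3 s).smul (h.2 s hs)).congr_deriv ?_
  rw [zero_smul, sub_zero, smul_smul, ← add_smul]
  convert zero_smul ℝ (w s) using 2
  field_simp
  ring

theorem add_half_smul_eq (h : IsNAGDMode 0 t₀ u w) (ht₀ : 0 < t₀) (ht : t₀ ≤ t) :
    u t + (t / 2) • w t = u t₀ + (t₀ / 2) • w t₀ := by
  refine eq_of_hasDerivAt_zero_Ici (f := fun s => u s + (s / 2) • w s) (fun s hs => ?_) ht
  have hs0 : s ≠ 0 := (ht₀.trans_le hs).ne'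
  refine ((h.1 s hs).add (((hasDerivAt_id s).div_const 2).smul (h.2 s hs))).congr_deriv ?_
  rw [zero_smul, sub_zero, smul_smul, id, show s / 2 * -(3 / s) = -(3 / 2 : ℝ) by field_simp]
  module

theorem w_eq_of_zero (h : IsNAGDMode 0 t₀ u w) (ht₀ : 0 < t₀) (ht : t₀ ≤ t) :
    w t = (t₀ / t) ^ 3 • w t₀ := by
  have ht0 : 0 < t := ht₀.trans_le ht
  rw [div_pow, div_eq_inv_mul, mul_smul, ← h.cube_smul_eq ht₀ ht, smul_smul,
    inv_mul_cancel₀ (by positivity), one_smul]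

theorem u_eq_of_zero (h : IsNAGDMode 0 t₀ u w) (ht₀ : 0 < t₀) (ht : t₀ ≤ t) :
    u t = u t₀ + (t₀ / 2 * (1 - (t₀ / t) ^ 2)) • w t₀ := by
  have ht0 : 0 < t := ht₀.trans_le ht
  rw [eq_sub_of_add_eq (h.add_half_smul_eq ht₀ ht), h.w_eq_of_zero ht₀ ht, smul_smul,
    add_sub_assoc, ← sub_smul]
  congr 2
  field_simp

theorem norm_le_of_zero (h : IsNAGDMode 0 t₀ u w) (ht₀ : 0 < t₀) (ht : t₀ ≤ t) :
    ‖u t‖ ≤ ‖u t₀‖ + t₀ / 2 * ‖w t₀‖ := by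
  have ht0 : 0 < t := ht₀.trans_le ht
  have hr : (t₀ / t) ^ 2 ≤ 1 := pow_le_one₀ (by positivity) ((div_le_one ht0).2 ht)
  rw [h.u_eq_of_zero ht₀ ht]
  refine (norm_add_le _ _).trans (add_le_add_right ?_ _)
  rw [norm_smul, Real.norm_of_nonneg (by nlinarith)]
  gcongr
  exact mul_le_of_le_one_right (by positivity) (by nlinarith)

theorem tendsto_of_zero (h : IsNAGDMode 0 t₀ u w) (ht₀ : 0 < t₀) :
    Tendsto u atTop (𝓝 (u t₀ + (t₀ / 2) • w t₀)) ∧ Tendsto w atTop (𝓝 0) := by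
  have hr : Tendsto (fun t => t₀ / t) atTop (𝓝 0) := tendsto_const_nhds.div_atTop tendsto_id
  have hev : ∀ᶠ t in atTop, t₀ ≤ t := eventually_ge_atTop t₀
  constructor
  · refine Tendsto.congr' (hev.mono fun t ht => (h.u_eq_of_zero ht₀ ht).symm) ?_
    simpa using ((((hr.pow 2).const_sub 1).const_mul (t₀ / 2)).smul_const (w t₀)).const_add (u t₀)
  · refine Tendsto.congr' (hev.mono fun t ht => (h.w_eq_of_zero ht₀ ht).symm) ?_
    simpa using (hr.pow 3).smul_const (w t₀)

theorem hasDerivAt_energy (h : IsNAGDMode lam t₀ u w) (ht : t₀ ≤ t) :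
    HasDerivAt (fun s => lam * ‖u s‖ ^ 2 + ‖w s‖ ^ 2) (-(6 / t) * ‖w t‖ ^ 2) t := by
  refine (((h.1 t ht).norm_sq.const_mul lam).add (h.2 t ht).norm_sq).congr_deriv ?_
  rw [inner_sub_right, inner_smul_right, inner_smul_right, real_inner_self_eq_norm_sq,
    real_inner_comm]
  ring

theorem hasDerivAt_lyapunov (h : IsNAGDMode lam t₀ u w) (ht₀ : 0 < t₀) (ht : t₀ ≤ t) :
    HasDerivAt (fun s => lam * s ^ 2 * ‖u s‖ ^ 2 + ‖(2 : ℝ) • u s + s • w s‖ ^ 2)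
      (-(2 * lam * t) * ‖u t‖ ^ 2) t := by
  have ht0 : t ≠ 0 := (ht₀.trans_le ht).ne'
  have hz : HasDerivAt (fun s => (2 : ℝ) • u s + s • w s) (-(lam * t) • u t) t := by
    refine (((h.1 t ht).const_smul (2 : ℝ)).add ((hasDerivAt_id t).smul (h.2 t ht))).congr_deriv ?_
    rw [id, one_smul, smul_sub, smul_smul, smul_smul]
    field_simp
    module
  refine ((((hasDerivAt_pow 2 t).const_mul lam).mul (h.1 t ht).norm_sq).add
    hz.norm_sq).congr_deriv ?_
  rw [inner_smul_right, inner_add_left, inner_smul_left, inner_smul_left,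
    real_inner_self_eq_norm_sq, real_inner_comm]
  simp only [conj_trivial]
  ring

theorem energy_le (h : IsNAGDMode lam t₀ u w) (ht₀ : 0 ≤ t₀) (ht : t₀ ≤ t) :
    lam * ‖u t‖ ^ 2 + ‖w t‖ ^ 2 ≤ lam * ‖u t₀‖ ^ 2 + ‖w t₀‖ ^ 2 :=
  le_of_hasDerivAt_nonpos_Ici (fun s hs => h.hasDerivAt_energy hs)
    (fun s hs => by
      have : 0 ≤ 6 / s * ‖w s‖ ^ 2 := by have := ht₀.trans_lt hs; positivity
      linarith) ht

theorem lyapunov_le (h : IsNAGDMode lam t₀ u w) (hlam : 0 ≤ lam) (ht₀ : 0 < t₀) (ht : t₀ ≤ t) :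
    lam * t ^ 2 * ‖u t‖ ^ 2 + ‖(2 : ℝ) • u t + t • w t‖ ^ 2 ≤
      lam * t₀ ^ 2 * ‖u t₀‖ ^ 2 + ‖(2 : ℝ) • u t₀ + t₀ • w t₀‖ ^ 2 :=
  le_of_hasDerivAt_nonpos_Ici (fun s hs => h.hasDerivAt_lyapunov ht₀ hs)
    (fun s hs => by
      have : 0 ≤ 2 * lam * s * ‖u s‖ ^ 2 := by have := ht₀.trans hs; positivity
      linarith) ht

theorem norm_le_of_pos (h : IsNAGDMode lam t₀ u w) (hlam : 0 < lam) (ht₀ : 0 ≤ t₀) (ht : t₀ ≤ t) :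
    ‖u t‖ ≤ ‖u t₀‖ + (√lam)⁻¹ * ‖w t₀‖ := by
  have hs : 0 < √lam := Real.sqrt_pos.2 hlam
  have hE := h.energy_le ht₀ ht
  rw [← Real.sq_sqrt hlam.le] at hE
  have key : √lam * ‖u t‖ ≤ √lam * ‖u t₀‖ + ‖w t₀‖ := by
    refine (pow_le_pow_iff_left₀ (by positivity) (by positivity) two_ne_zero).1 ?_
    nlinarith [sq_nonneg ‖w t‖,
      mul_nonneg (mul_nonneg hs.le (norm_nonneg (u t₀))) (norm_nonneg (w t₀))]
  field_simp
  linarith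

theorem tendsto_of_pos (h : IsNAGDMode lam t₀ u w) (hlam : 0 < lam) (ht₀ : 0 < t₀) :
    Tendsto u atTop (𝓝 0) ∧ Tendsto w atTop (𝓝 0) := by
  set V := lam * t₀ ^ 2 * ‖u t₀‖ ^ 2 + ‖(2 : ℝ) • u t₀ + t₀ • w t₀‖ ^ 2
  have hV : ∀ t, t₀ ≤ t →
      lam * t ^ 2 * ‖u t‖ ^ 2 ≤ V ∧ ‖(2 : ℝ) • u t + t • w t‖ ^ 2 ≤ V := fun t ht => by
    have := h.lyapunov_le hlam.le ht₀ ht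
    constructor <;> nlinarith [sq_nonneg ‖(2 : ℝ) • u t + t • w t‖, sq_nonneg (t * ‖u t‖)]
  constructor
  · refine tendsto_zero_of_norm_le_div (t₀ := t₀) (K := √(V / lam)) fun t ht => ?_
    rw [le_div_iff₀ (ht₀.trans_le ht)]
    refine Real.le_sqrt_of_sq_le ?_
    rw [le_div_iff₀ hlam]
    nlinarith [(hV t ht).1]
  · refine tendsto_zero_of_norm_le_div (t₀ := t₀) (K := √V + 2 * (‖u t₀‖ + (√lam)⁻¹ * ‖w t₀‖))
      fun t ht => ?_
    have ht0 : 0 < t := ht₀.trans_le ht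
    rw [le_div_iff₀ ht0]
    calc ‖w t‖ * t = ‖((2 : ℝ) • u t + t • w t) - (2 : ℝ) • u t‖ := by
          rw [add_sub_cancel_left, norm_smul, Real.norm_of_nonneg ht0.le, mul_comm]
      _ ≤ ‖(2 : ℝ) • u t + t • w t‖ + ‖(2 : ℝ) • u t‖ := norm_sub_le _ _
      _ = ‖(2 : ℝ) • u t + t • w t‖ + 2 * ‖u t‖ := by rw [norm_smul, Real.norm_two]
      _ ≤ √V + 2 * (‖u t₀‖ + (√lam)⁻¹ * ‖w t₀‖) := by
          gcongr
          · exact Real.le_sqrt_of_sq_le (hV t ht).2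
          · exact h.norm_le_of_pos hlam ht₀.le ht

theorem norm_le (h : IsNAGDMode lam t₀ u w) (hlam : 0 ≤ lam) (ht₀ : 0 < t₀) {C : ℝ}
    (hC₀ : t₀ / 2 ≤ C) (hC : 0 < lam → (√lam)⁻¹ ≤ C) (ht : t₀ ≤ t) :
    ‖u t‖ ≤ ‖u t₀‖ + C * ‖w t₀‖ := by
  obtain rfl | hlam := hlam.eq_or_lt
  · exact (h.norm_le_of_zero ht₀ ht).trans (by gcongr)
  · exact (h.norm_le_of_pos hlam ht₀.le ht).trans (by gcongr; exact hC hlam)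

theorem tendsto (h : IsNAGDMode lam t₀ u w) (hlam : 0 ≤ lam) (ht₀ : 0 < t₀) :
    (∃ L, Tendsto u atTop (𝓝 L)) ∧ Tendsto w atTop (𝓝 0) := by
  obtain rfl | hlam := hlam.eq_or_lt
  · exact ⟨⟨_, (h.tendsto_of_zero ht₀).1⟩, (h.tendsto_of_zero ht₀).2⟩
  · exact ⟨⟨0, (h.tendsto_of_pos hlam ht₀).1⟩, (h.tendsto_of_pos hlam ht₀).2⟩

end IsNAGDMode

end Mode

theorem EuclideanSpace.norm_toLp_le_add_mul_of_forall {𝕜 ι : Type*} [RCLike 𝕜] [Fintype ι]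
    {x y z : ι → 𝕜} {C : ℝ} (hC : 0 ≤ C) (h : ∀ i, ‖x i‖ ≤ ‖y i‖ + C * ‖z i‖) :
    ‖WithLp.toLp 2 x‖ ≤ ‖WithLp.toLp 2 y‖ + C * ‖WithLp.toLp 2 z‖ := by
  let a : EuclideanSpace ℝ ι := WithLp.toLp 2 fun i => ‖y i‖
  let b : EuclideanSpace ℝ ι := WithLp.toLp 2 fun i => ‖z i‖
  calc ‖WithLp.toLp 2 x‖ ≤ ‖a + C • b‖ := by
        rw [EuclideanSpace.norm_eq, EuclideanSpace.norm_eq]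
        gcongr with i
        simpa [a, b] using (h i).trans (le_abs_self _)
    _ ≤ ‖a‖ + ‖C • b‖ := norm_add_le _ _
    _ = ‖WithLp.toLp 2 y‖ + C * ‖WithLp.toLp 2 z‖ := by
        simp [a, b, norm_smul, abs_of_nonneg hC, EuclideanSpace.norm_eq]

theorem e2norm_eq_norm_toLp_ofReal {N : ℕ} (x : Fin N → ℝ) :
    e2norm x = ‖WithLp.toLp 2 fun j => (x j : ℂ)‖ := by
  simp [e2norm, EuclideanSpace.norm_eq, Complex.norm_real, sq_abs]

theorem norm_toLp_mulVec_le {N : ℕ} (M : Matrix (Fin N) (Fin N) ℂ) (x : Fin N → ℂ) :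
    ‖WithLp.toLp 2 (M *ᵥ x)‖ ≤ l2OpNorm M * ‖WithLp.toLp 2 x‖ :=
  (LinearMap.toContinuousLinearMap (Matrix.toEuclideanLin M)).le_opNorm (WithLp.toLp 2 x)

theorem half_le_Cconst {N : ℕ} (t₀ : ℝ) (d : Fin N → ℝ) : t₀ / 2 ≤ Cconst t₀ d := by
  unfold Cconst
  split_ifs
  exacts [le_max_left _ _, le_rfl]

theorem inv_sqrt_le_Cconst {N : ℕ} (t₀ : ℝ) {d : Fin N → ℝ} {i : Fin N} (hi : 0 < d i) :
    (√(d i))⁻¹ ≤ Cconst t₀ d := by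
  have hmem : d i ∈ (Finset.univ.filter fun i => 0 < d i).image d :=
    Finset.mem_image_of_mem d (Finset.mem_filter.2 ⟨Finset.mem_univ i, hi⟩)
  have hS : ((Finset.univ.filter fun i => 0 < d i).image d).Nonempty := ⟨_, hmem⟩
  rw [Cconst, dif_pos hS]
  set m := ((Finset.univ.filter fun i => 0 < d i).image d).min' hS
  have hm : 0 < m := by
    obtain ⟨j, hj, hjm⟩ := Finset.mem_image.1 (Finset.min'_mem _ hS)
    exact (Finset.mem_filter.1 hj).2.trans_eq hjm
  refine le_max_of_le_right ?_
  rw [neg_div, Real.rpow_neg hm.le, ← Real.sqrt_eq_rpow]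
  gcongr
  exact Finset.min'_le _ _ hmem

theorem IsNAGDTrajectory.isNAGDMode {N : ℕ} {G : Matrix (Fin N) (Fin N) ℝ} {t₀ : ℝ}
    {q v : ℝ → Fin N → ℝ} {A : Matrix (Fin N) (Fin N) ℂ} {d : Fin N → ℝ}
    (htraj : IsNAGDTrajectory G t₀ q v)
    (hA : A * G.map Complex.ofReal = diagonal (fun i => (d i : ℂ)) * A) (i : Fin N) :
    IsNAGDMode (d i) t₀ (fun t => (A *ᵥ fun j => (q t j : ℂ)) i)
      (fun t => (A *ᵥ fun j => (v t j : ℂ)) i) := by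
  let Φ : (Fin N → ℝ) →L[ℝ] (Fin N → ℂ) :=
    (LinearMap.toContinuousLinearMap ((Matrix.mulVecLin A).restrictScalars ℝ)).comp
      (ContinuousLinearMap.piMap fun _ => Complex.ofRealCLM)
  have hΦ : ∀ x, Φ x = A *ᵥ fun j => (x j : ℂ) := fun _ => rfl
  have hΦG : ∀ x, Φ (G *ᵥ x) i = d i • Φ x i := fun x => by
    rw [hΦ, hΦ, Complex.real_smul, ← mulVec_diagonal (fun i => (d i : ℂ)), mulVec_mulVec, ← hA,
      ← mulVec_mulVec]
    congr
    funext j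
    exact RingHom.map_mulVec Complex.ofRealHom G x j
  have hderiv : ∀ {f : ℝ → Fin N → ℝ} {x : Fin N → ℝ} {t : ℝ}, HasDerivAt f x t →
      HasDerivAt (fun s => Φ (f s) i) (Φ x i) t :=
    fun h => hasDerivAt_pi.1 (Φ.hasFDerivAt.comp_hasDerivAt _ h) i
  refine ⟨fun t ht => hderiv (htraj.1 t ht), fun t ht => (hderiv (htraj.2 t ht)).congr_deriv ?_⟩
  rw [map_sub, map_smul, Pi.sub_apply, Pi.smul_apply, hΦG]
  rfl

theorem tendsto_of_tendsto_mulVec_ofReal {N : ℕ} {A B : Matrix (Fin N) (Fin N) ℂ} (hBA : B * A = 1)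
    {l : Filter ℝ} {f : ℝ → Fin N → ℝ} {y : Fin N → ℂ}
    (h : Tendsto (fun t => A *ᵥ fun j => (f t j : ℂ)) l (𝓝 y)) :
    Tendsto f l (𝓝 fun j => ((B *ᵥ y) j).re) := by
  have hcont : Continuous fun y : Fin N → ℂ => fun j => ((B *ᵥ y) j).re := by fun_prop
  convert (hcont.tendsto y).comp h using 1
  funext t j
  simp [mulVec_mulVec, hBA]

/-- if `G` is diagonalizable over ℂ via an invertible `P` with nonnegative
real eigenvalues `d i`, then every NAGD trajectory is bounded, `q(t)` converges,
`q'(t) → 0`, and `sup_{t ≥ t₀} ‖q(t)‖₂ ≤ κ(P) (‖q(t₀)‖₂ + C ‖q'(t₀)‖₂)` where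
`κ(P) = ‖P‖₂ ‖P⁻¹‖₂` and `C = max {t₀/2, λ_min^{-1/2}}`. -/
theorem stmt_15 {N : ℕ} (G : Matrix (Fin N) (Fin N) ℝ)
    (P : Matrix (Fin N) (Fin N) ℂ) (hP : IsUnit P)
    (d : Fin N → ℝ) (hd : ∀ i, 0 ≤ d i)
    (hdiag : P⁻¹ * G.map Complex.ofReal * P = Matrix.diagonal fun i => (d i : ℂ))
    (t₀ : ℝ) (ht₀ : 0 < t₀)
    (q v : ℝ → Fin N → ℝ) (htraj : IsNAGDTrajectory G t₀ q v) :
    (∃ M : ℝ, ∀ t, t₀ ≤ t → e2norm (q t) ≤ M) ∧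
    (∃ qinf : Fin N → ℝ, Tendsto q atTop (nhds qinf)) ∧
    Tendsto v atTop (nhds 0) ∧
    (∀ t, t₀ ≤ t → e2norm (q t) ≤
      (l2OpNorm P * l2OpNorm P⁻¹) * (e2norm (q t₀) + Cconst t₀ d * e2norm (v t₀))) := by
  have hdet : IsUnit P.det := (isUnit_iff_isUnit_det P).1 hP
  have hPP : P * P⁻¹ = 1 := mul_nonsing_inv P hdet
  have hA : P⁻¹ * G.map Complex.ofReal = diagonal (fun i => (d i : ℂ)) * P⁻¹ := by
    rw [← hdiag, mul_nonsing_inv_cancel_right _ _ hdet]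
  have hmode := htraj.isNAGDMode hA
  have hbound : ∀ t, t₀ ≤ t → e2norm (q t) ≤
      (l2OpNorm P * l2OpNorm P⁻¹) * (e2norm (q t₀) + Cconst t₀ d * e2norm (v t₀)) := by
    intro t ht
    have hC : 0 ≤ Cconst t₀ d := (half_le_Cconst t₀ d).trans' (by positivity)
    have hq : e2norm (q t) = ‖WithLp.toLp 2 (P *ᵥ P⁻¹ *ᵥ fun j => (q t j : ℂ))‖ := by
      rw [mulVec_mulVec, hPP, one_mulVec, e2norm_eq_norm_toLp_ofReal]
    have hmodes := EuclideanSpace.norm_toLp_le_add_mul_of_forall hC fun i =>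
      (hmode i).norm_le (hd i) ht₀ (half_le_Cconst t₀ d) (inv_sqrt_le_Cconst t₀) ht
    rw [hq, mul_assoc, mul_add, mul_left_comm _ (Cconst t₀ d)]
    refine (norm_toLp_mulVec_le _ _).trans
      (mul_le_mul_of_nonneg_left (hmodes.trans ?_) (norm_nonneg _))
    rw [e2norm_eq_norm_toLp_ofReal, e2norm_eq_norm_toLp_ofReal]
    gcongr <;> exact norm_toLp_mulVec_le _ _
  choose L hL using fun i => ((hmode i).tendsto (hd i) ht₀).1
  have hq := tendsto_of_tendsto_mulVec_ofReal hPP (tendsto_pi_nhds.2 hL)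
  have hv := tendsto_of_tendsto_mulVec_ofReal hPP
    (tendsto_pi_nhds.2 fun i => ((hmode i).tendsto (hd i) ht₀).2)
  refine ⟨⟨_, hbound⟩, ⟨_, hq⟩, by simpa [← Pi.zero_def] using hv, hbound⟩
end

section
/- Let G ∈ ℝ^{N×N} be symmetric and positive semidefinite, let t₀ > 0, and let q : [t₀, ∞) → ℝ^N be a trajectory of the NAGD game dynamics q''(t) + (3/t) q'(t) + G q(t) = 0, with v = q'. Define V(t) = (t²/2)·q(t)ᵀ G q(t) + (1/2)·‖t·v(t) + 2·q(t)‖₂². Then: (a) V(t) ≥ 0 for all t ≥ t₀; (b) V is differentiable with V'(t) = −t·q(t)ᵀ G q(t) ≤ 0 for all t ≥ t₀; (c) V is nonincreasing and ∫_{t₀}^∞ t·q(t)ᵀ G q(t) dt ≤ V(t₀) < ∞. -/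
open Filter MeasureTheory

/-!
Along an NAGD trajectory the combination `w = t v + 2 q` satisfies `w' = -t G q`: the friction
term `(3/t) v` is cancelled exactly. Differentiating `V = (t²/2) qᵀGq + ‖w‖²/2`, the cross terms
`± t² vᵀGq` cancel (by symmetry of `G`), leaving `V' = -t qᵀGq ≤ 0`. A nonnegative function whose
derivative is `-f` with `f ≥ 0` is nonincreasing and has a limit at infinity, so the fundamental
theorem of calculus on `[t₀, ∞)` makes `f` integrable with `∫ f ≤ V(t₀)`.
-/

open Matrix Set Topology

section Calculus

variable {ι : Type*} [Fintype ι] {x y : ℝ → ι → ℝ} {x' y' : ι → ℝ} {t : ℝ}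

theorem HasDerivAt.dotProduct (hx : HasDerivAt x x' t) (hy : HasDerivAt y y' t) :
    HasDerivAt (fun s => x s ⬝ᵥ y s) (x' ⬝ᵥ y t + x t ⬝ᵥ y') t := by
  have := HasDerivAt.fun_sum (u := Finset.univ) fun i _ =>
    (hasDerivAt_pi.1 hx i).fun_mul (hasDerivAt_pi.1 hy i)
  rw [Finset.sum_add_distrib] at this
  exact this

theorem HasDerivAt.mulVec (A : Matrix ι ι ℝ) (hx : HasDerivAt x x' t) :
    HasDerivAt (fun s => A *ᵥ x s) (A *ᵥ x') t :=
  (LinearMap.toContinuousLinearMap A.mulVecLin).hasFDerivAt.comp_hasDerivAt t hx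

theorem HasDerivAt.dotProduct_mulVec_self {A : Matrix ι ι ℝ} (hA : A.IsSymm)
    (hx : HasDerivAt x x' t) :
    HasDerivAt (fun s => x s ⬝ᵥ A *ᵥ x s) (2 * (x' ⬝ᵥ A *ᵥ x t)) t := by
  have hswap : x t ⬝ᵥ A *ᵥ x' = x' ⬝ᵥ A *ᵥ x t := by
    rw [dotProduct_mulVec, ← mulVec_transpose, hA.eq, dotProduct_comm]
  convert hx.dotProduct (hx.mulVec A) using 1
  rw [hswap]
  ring

end Calculus

section Lyapunov

variable {V f : ℝ → ℝ} {a : ℝ}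

theorem antitoneOn_Ici_of_hasDerivAt_neg (hV : ∀ x ∈ Ici a, HasDerivAt V (-f x) x)
    (hf : ∀ x ∈ Ici a, 0 ≤ f x) : AntitoneOn V (Ici a) := by
  refine antitoneOn_of_hasDerivWithinAt_nonpos (f' := fun x => -f x) (convex_Ici a)
    (fun x hx => (hV x hx).continuousAt.continuousWithinAt) (fun x hx => ?_) fun x hx => ?_
  all_goals rw [interior_Ici] at hx
  · exact (hV x (mem_Ici_of_Ioi hx)).hasDerivWithinAt
  · exact neg_nonpos.2 (hf x (mem_Ici_of_Ioi hx))

theorem exists_tendsto_of_hasDerivAt_neg (hV : ∀ x ∈ Ici a, HasDerivAt V (-f x) x)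
    (hf : ∀ x ∈ Ici a, 0 ≤ f x) (hV₀ : ∀ x ∈ Ici a, 0 ≤ V x) :
    ∃ l, 0 ≤ l ∧ Tendsto V atTop (𝓝 l) := by
  have hanti := antitoneOn_Ici_of_hasDerivAt_neg hV hf
  have hmem (x : ℝ) : max a x ∈ Ici a := le_max_left a x
  have hmax : Antitone fun x => V (max a x) := fun x y hxy =>
    hanti (hmem x) (hmem y) (max_le_max_left a hxy)
  have hlim := tendsto_atTop_ciInf hmax ⟨0, by rintro _ ⟨x, rfl⟩; exact hV₀ _ (hmem x)⟩
  refine ⟨_, ge_of_tendsto' hlim fun x => hV₀ _ (hmem x), hlim.congr' ?_⟩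
  filter_upwards [eventually_ge_atTop a] with x hx
  rw [max_eq_right hx]

theorem integrableOn_Ici_of_hasDerivAt_neg (hV : ∀ x ∈ Ici a, HasDerivAt V (-f x) x)
    (hf : ∀ x ∈ Ici a, 0 ≤ f x) (hV₀ : ∀ x ∈ Ici a, 0 ≤ V x) : IntegrableOn f (Ici a) := by
  obtain ⟨l, -, hl⟩ := exists_tendsto_of_hasDerivAt_neg hV hf hV₀
  rw [integrableOn_Ici_iff_integrableOn_Ioi, IntegrableOn, ← integrable_neg_iff]
  exact integrableOn_Ioi_deriv_of_nonpos' hV (fun x hx => neg_nonpos.2 (hf x hx.out.le)) hl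

theorem setIntegral_Ici_le_of_hasDerivAt_neg (hV : ∀ x ∈ Ici a, HasDerivAt V (-f x) x)
    (hf : ∀ x ∈ Ici a, 0 ≤ f x) (hV₀ : ∀ x ∈ Ici a, 0 ≤ V x) : ∫ x in Ici a, f x ≤ V a := by
  obtain ⟨l, hl₀, hl⟩ := exists_tendsto_of_hasDerivAt_neg hV hf hV₀
  have h := integral_Ioi_of_hasDerivAt_of_nonpos' hV
    (fun x hx => neg_nonpos.2 (hf x hx.out.le)) hl
  rw [integral_neg] at h
  rw [integral_Ici_eq_integral_Ioi]
  linarith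

end Lyapunov

section NAGD

variable {ι : Type*} [Fintype ι]

noncomputable def nagdLyapunov (G : Matrix ι ι ℝ) (q v : ℝ → ι → ℝ) (t : ℝ) : ℝ :=
  t ^ 2 / 2 * q t ⬝ᵥ G *ᵥ q t + 1 / 2 * ∑ i, (t * v t i + 2 * q t i) ^ 2

theorem nagdLyapunov_nonneg {G : Matrix ι ι ℝ} (hG : ∀ x, 0 ≤ x ⬝ᵥ G *ᵥ x)
    (q v : ℝ → ι → ℝ) (t : ℝ) : 0 ≤ nagdLyapunov G q v t := by
  unfold nagdLyapunov
  have := hG (q t)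
  positivity

variable {N : ℕ} {G : Matrix (Fin N) (Fin N) ℝ} {t₀ t : ℝ} {q v : ℝ → Fin N → ℝ}

theorem IsNAGDTrajectory.hasDerivAt_nagdLyapunov (hG : G.IsSymm)
    (h : IsNAGDTrajectory G t₀ q v) (ht₀ : 0 < t₀) (ht : t₀ ≤ t) :
    HasDerivAt (nagdLyapunov G q v) (-(t * q t ⬝ᵥ G *ᵥ q t)) t := by
  obtain ⟨hq, hv⟩ := h
  have ht0 : t ≠ 0 := (ht₀.trans_le ht).ne'
  have hw : HasDerivAt (fun s => s • v s + (2 : ℝ) • q s) (-t • G *ᵥ q t) t := by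
    refine (((hasDerivAt_id' t).fun_smul (hv t ht)).fun_add
      ((hq t ht).fun_const_smul (2 : ℝ))).congr_deriv ?_
    rw [smul_sub, smul_smul, show t * -(3 / t) = -3 by field_simp]
    module
  have hpot : HasDerivAt (fun s => s ^ 2 / 2 * q s ⬝ᵥ G *ᵥ q s)
      (t / 2 * 2 * q t ⬝ᵥ G *ᵥ q t + t ^ 2 / 2 * (2 * (v t ⬝ᵥ G *ᵥ q t))) t := by
    refine (((hasDerivAt_pow 2 t).div_const 2).fun_mul
      ((hq t ht).dotProduct_mulVec_self hG)).congr_deriv ?_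
    push_cast; ring
  have hkin := (hw.dotProduct hw).const_mul (1 / 2 : ℝ)
  have hfun : nagdLyapunov G q v = fun s => s ^ 2 / 2 * q s ⬝ᵥ G *ᵥ q s +
      1 / 2 * (s • v s + (2 : ℝ) • q s) ⬝ᵥ (s • v s + (2 : ℝ) • q s) := by
    funext s
    simp [nagdLyapunov, dotProduct, sq]
  rw [hfun]
  refine (hpot.fun_add hkin).congr_deriv ?_
  simp only [add_dotProduct, dotProduct_add, smul_dotProduct, dotProduct_smul, smul_eq_mul]
  rw [dotProduct_comm (G *ᵥ q t) (v t), dotProduct_comm (G *ᵥ q t) (q t)]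
  ring

end NAGD

/-- for `G` symmetric positive semidefinite and the Lyapunov function
`V(t) = (t²/2) q(t)ᵀ G q(t) + (1/2) ‖t v(t) + 2 q(t)‖₂²` along an NAGD trajectory:
(a) `V ≥ 0`; (b) `V'(t) = -t q(t)ᵀ G q(t) ≤ 0`; (c) `V` is nonincreasing on `[t₀, ∞)` and
`∫_{t₀}^∞ t q(t)ᵀ G q(t) dt ≤ V(t₀) < ∞`. -/
theorem stmt_16 {N : ℕ} (G : Matrix (Fin N) (Fin N) ℝ)
    (hsymm : G.transpose = G)
    (hpsd : ∀ x : Fin N → ℝ, 0 ≤ dotProduct x (G.mulVec x))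
    (t₀ : ℝ) (ht₀ : 0 < t₀)
    (q v : ℝ → Fin N → ℝ) (htraj : IsNAGDTrajectory G t₀ q v)
    (V : ℝ → ℝ)
    (hV : V = fun t => t ^ 2 / 2 * dotProduct (q t) (G.mulVec (q t)) +
      (1 / 2) * ∑ i, (t * v t i + 2 * q t i) ^ 2) :
    (∀ t, t₀ ≤ t → 0 ≤ V t) ∧
    (∀ t, t₀ ≤ t →
      HasDerivAt V (-(t * dotProduct (q t) (G.mulVec (q t)))) t ∧
      -(t * dotProduct (q t) (G.mulVec (q t))) ≤ 0) ∧
    AntitoneOn V (Set.Ici t₀) ∧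
    IntegrableOn (fun t => t * dotProduct (q t) (G.mulVec (q t))) (Set.Ici t₀) ∧
    ∫ t in Set.Ici t₀, t * dotProduct (q t) (G.mulVec (q t)) ≤ V t₀ := by
  obtain rfl : V = nagdLyapunov G q v := hV
  have hderiv : ∀ t ∈ Ici t₀,
      HasDerivAt (nagdLyapunov G q v) (-(t * q t ⬝ᵥ G *ᵥ q t)) t :=
    fun t ht => htraj.hasDerivAt_nagdLyapunov hsymm ht₀ ht
  have hf : ∀ t ∈ Ici t₀, 0 ≤ t * q t ⬝ᵥ G *ᵥ q t :=
    fun t ht => mul_nonneg (ht₀.le.trans ht) (hpsd _)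
  have hV₀ : ∀ t ∈ Ici t₀, 0 ≤ nagdLyapunov G q v t :=
    fun t _ => nagdLyapunov_nonneg hpsd q v t
  exact ⟨hV₀, fun t ht => ⟨hderiv t ht, neg_nonpos.2 (hf t ht)⟩,
    antitoneOn_Ici_of_hasDerivAt_neg hderiv hf, integrableOn_Ici_of_hasDerivAt_neg hderiv hf hV₀,
    setIntegral_Ici_le_of_hasDerivAt_neg hderiv hf hV₀⟩
end
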